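/- Let Δ = Δ_z × Δ_w ⊂ ℂ^m × ℂ^{n−m} be a Weierstrass polydisc for a pure m-dimensional analytic set X, and let F be holomorphic on a neighborhood of Δ̄. Let Y_F := π_z(X ∩ Δ ∩ {F = 0}) be the projection of the zero set. If Δ'_z = Δ_{z'} × Δ_{w'} ⊂ Δ_z is a Weierstrass polydisc for Y_F (with respect to the splitting z = (z', w')), then Δ' := Δ'_z × Δ_w is a Weierstrass polydisc for X ∩ Δ ∩ {F = 0}. -/
import Mathlib


/-- An open polydisc in `ℂ^p` with center `c` and polyradius `r`. -/
def Polydisc {p : ℕ} (c : Fin p → ℂ) (r : Fin p → ℝ) : Set (Fin p → ℂ) :=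
  {z | ∀ i, z i ∈ Metric.ball (c i) (r i)}

/-- If `Δ = Δ_z × Δ_w` is a Weierstrass polydisc for `X` (i.e. the closure of `Δ` lies
in `Ω` and `closure Δ_z × ∂Δ_w` misses `X`) and `Δ'_z = Δ_{z'} × Δ_{w'} ⊆ Δ_z` is a
Weierstrass polydisc for `Y_F = π_z(X ∩ Δ ∩ {F = 0})`, then `Δ_{z'} × (Δ_{w'} × Δ_w)`
is a Weierstrass polydisc for `X ∩ Δ ∩ {F = 0}`. -/
theorem weierstrass_extend {n₁ n₂ n₃ : ℕ}
    (Ω : Set (((Fin n₁ → ℂ) × (Fin n₂ → ℂ)) × (Fin n₃ → ℂ))) (hΩ : IsOpen Ω)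
    (X : Set (((Fin n₁ → ℂ) × (Fin n₂ → ℂ)) × (Fin n₃ → ℂ))) (hXΩ : X ⊆ Ω)
    (c₁ : Fin n₁ → ℂ) (r₁ : Fin n₁ → ℝ) (hr₁ : ∀ i, 0 < r₁ i)
    (c₂ : Fin n₂ → ℂ) (r₂ : Fin n₂ → ℝ) (hr₂ : ∀ i, 0 < r₂ i)
    (c₃ : Fin n₃ → ℂ) (r₃ : Fin n₃ → ℝ) (hr₃ : ∀ i, 0 < r₃ i)
    (c₁' : Fin n₁ → ℂ) (r₁' : Fin n₁ → ℝ) (hr₁' : ∀ i, 0 < r₁' i)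
    (c₂' : Fin n₂ → ℂ) (r₂' : Fin n₂ → ℝ) (hr₂' : ∀ i, 0 < r₂' i)
    (F : ((Fin n₁ → ℂ) × (Fin n₂ → ℂ)) × (Fin n₃ → ℂ) → ℂ)
    (hF : DifferentiableOn ℂ F Ω)
    (hclos : closure ((Polydisc c₁ r₁ ×ˢ Polydisc c₂ r₂) ×ˢ Polydisc c₃ r₃) ⊆ Ω)
    (hWei : (closure (Polydisc c₁ r₁ ×ˢ Polydisc c₂ r₂) ×ˢ frontier (Polydisc c₃ r₃)) ∩ X = ∅)
    (hsub : Polydisc c₁' r₁' ×ˢ Polydisc c₂' r₂' ⊆ Polydisc c₁ r₁ ×ˢ Polydisc c₂ r₂)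
    (hWei' : (closure (Polydisc c₁' r₁') ×ˢ frontier (Polydisc c₂' r₂')) ∩
        (Prod.fst '' (X ∩ ((Polydisc c₁ r₁ ×ˢ Polydisc c₂ r₂) ×ˢ Polydisc c₃ r₃) ∩
          {q | F q = 0})) = ∅) :
    (closure (Polydisc c₁' r₁') ×ˢ frontier (Polydisc c₂' r₂' ×ˢ Polydisc c₃ r₃)) ∩
      ((fun q => (q.1.1, (q.1.2, q.2))) ''
        (X ∩ ((Polydisc c₁ r₁ ×ˢ Polydisc c₂ r₂) ×ˢ Polydisc c₃ r₃) ∩ {q | F q = 0})) =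
      ∅ := by
  have hopen : ∀ (p : ℕ) (c : Fin p → ℂ) (r : Fin p → ℝ), IsOpen (Polydisc c r) := by
    intro p c r
    have : Polydisc c r = Set.pi Set.univ (fun i => Metric.ball (c i) (r i)) := by
      ext z; simp [Polydisc, Set.mem_pi]
    rw [this]
    exact isOpen_set_pi Set.finite_univ (fun i _ => Metric.isOpen_ball)
  ext p
  simp only [Set.mem_inter_iff, Set.mem_empty_iff_false, iff_false, Set.mem_image, not_and]
  rintro ⟨hp1, hp2⟩ ⟨q, hq, rfl⟩
  obtain ⟨⟨hqX, hq1, hq3⟩, hqF⟩ := hq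
  rw [frontier_prod_eq] at hp2
  rcases hp2 with ⟨h2, h3⟩ | ⟨h2, h3⟩
  · have : q.2 ∉ Polydisc c₃ r₃ := by
      rw [(hopen _ c₃ r₃).frontier_eq] at h3
      exact h3.2
    exact this hq3
  · have : (q.1.1, q.1.2) ∈ (closure (Polydisc c₁' r₁') ×ˢ frontier (Polydisc c₂' r₂')) ∩
        (Prod.fst '' (X ∩ ((Polydisc c₁ r₁ ×ˢ Polydisc c₂ r₂) ×ˢ Polydisc c₃ r₃) ∩
          {q | F q = 0})) :=
      ⟨⟨hp1, h2⟩, ⟨q, ⟨⟨hqX, hq1, hq3⟩, hqF⟩, rfl⟩⟩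
    rw [hWei'] at this
    exact this
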